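/- Fix V > 0 and for B > 0 let λ*₁(B) := (4V/π)·[1 − 4I₂(√B)/(√B·I₁(√B))]^{−1} and h₁*(B;r) := (λ*₁(B)/2)(1 − r²) − (λ*₁(B)/(√B·I₁(√B)))·[I₀(√B) − I₀(√B·r)]. Then for every r ∈ [0,1], h₁*(B;r) → (2V/π)(1 − r²) as B → ∞. -/

import Mathlib

/-- Modified Bessel function of the first kind of (natural) order `n`,
`I_n(x) = sum_k (x/2)^(2k+n) / (k! * Gamma (k+n+1))`. -/
noncomputable def besselI (n : ℕ) (x : ℝ) : ℝ :=
  ∑' k : ℕ, (x / 2) ^ (2 * k + n) / ((k.factorial : ℝ) * Real.Gamma (k + n + 1))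

/-- The squared maximal sloshing frequency lambda*1(B) for m = 1 with surface tension. -/
noncomputable def lamStarR1 (V B : ℝ) : ℝ :=
  (4 * V / Real.pi) * (1 - 4 * besselI 2 (Real.sqrt B) /
    (Real.sqrt B * besselI 1 (Real.sqrt B)))⁻¹

/-- The optimal radial container profile h1*(B; r) for m = 1 with surface tension. -/
noncomputable def hStarR1 (V B r : ℝ) : ℝ :=
  lamStarR1 V B / 2 * (1 - r ^ 2) -
    lamStarR1 V B / (Real.sqrt B * besselI 1 (Real.sqrt B)) *
      (besselI 0 (Real.sqrt B) - besselI 0 (Real.sqrt B * r))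


/-!
Both correction terms of `h₁*(B; r)` have the form `f(√B) / (√B · I₁(√B))` with
`0 ≤ f ≤ C · I₁`, hence are `O(1/√B)`: here `f = 4 I₂` with `I₂ ≤ 2 I₁`, and
`f = I₀(√B) - I₀(√B r)` with `I₀(x) ≤ 4 I₁(x)` for `x ≥ 2`. So `λ*₁(B) → 4V/π` and
`h₁*(B; r) → (2V/π)(1 - r²)`. The two Bessel inequalities are proved termwise: writing
`T(n, k)` for the `k`-th series term of `Iₙ(x)` and `t = x/2`, the recurrences
`(k+n+1) T(n+1, k) = t T(n, k)` and `t T(n+1, k) = (k+1) T(n, k+1)` bound a term by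
`T(1, k)` when `t` is small compared to `k` and by a multiple of `T(1, k+1)` otherwise.
-/

open Filter Topology

noncomputable def besselTerm (n : ℕ) (x : ℝ) (k : ℕ) : ℝ :=
  (x / 2) ^ (2 * k + n) / ((k.factorial : ℝ) * ((k + n).factorial : ℝ))

lemma besselI_eq_tsum (n : ℕ) (x : ℝ) : besselI n x = ∑' k, besselTerm n x k := by
  unfold besselI besselTerm
  congr 1 with k
  rw [show (k : ℝ) + n + 1 = ((k + n : ℕ) : ℝ) + 1 by push_cast; ring,
    Real.Gamma_nat_eq_factorial]

section BesselTerm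

variable {x : ℝ}

lemma besselTerm_nonneg (n : ℕ) (hx : 0 ≤ x) (k : ℕ) : 0 ≤ besselTerm n x k := by
  unfold besselTerm; positivity

lemma summable_besselTerm (n : ℕ) (hx : 0 ≤ x) : Summable (besselTerm n x) := by
  refine Summable.of_nonneg_of_le (besselTerm_nonneg n hx) (fun k => ?_)
    ((Real.summable_pow_div_factorial ((x / 2) ^ 2)).mul_left ((x / 2) ^ n))
  have hk : (0 : ℝ) < k.factorial := by exact_mod_cast k.factorial_pos
  have hkn : (1 : ℝ) ≤ (k + n).factorial := by exact_mod_cast (k + n).factorial_pos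
  rw [besselTerm, ← mul_div_assoc, ← pow_mul, ← pow_add, add_comm n]
  exact div_le_div_of_nonneg_left (by positivity) hk (le_mul_of_one_le_right hk.le hkn)

lemma mul_besselTerm_succ_order (n : ℕ) (x : ℝ) (k : ℕ) :
    ((k : ℝ) + n + 1) * besselTerm (n + 1) x k = x / 2 * besselTerm n x k := by
  have hk : (0 : ℝ) < k.factorial := by exact_mod_cast k.factorial_pos
  have hkn : (0 : ℝ) < (k + n).factorial := by exact_mod_cast (k + n).factorial_pos
  have hfac : ((k + (n + 1)).factorial : ℝ) = ((k : ℝ) + n + 1) * (k + n).factorial := by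
    rw [← add_assoc, Nat.factorial_succ]; push_cast; ring
  rw [besselTerm, besselTerm, hfac, ← add_assoc, pow_succ]
  field_simp

lemma half_mul_besselTerm_succ_order (n : ℕ) (x : ℝ) (k : ℕ) :
    x / 2 * besselTerm (n + 1) x k = ((k : ℝ) + 1) * besselTerm n x (k + 1) := by
  have hk : (0 : ℝ) < k.factorial := by exact_mod_cast k.factorial_pos
  have hkn : (0 : ℝ) < (k + n).factorial := by exact_mod_cast (k + n).factorial_pos
  have hfac : ((k + 1).factorial : ℝ) = ((k : ℝ) + 1) * k.factorial := by
    rw [Nat.factorial_succ]; push_cast; ring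
  rw [besselTerm, besselTerm, hfac, show 2 * (k + 1) + n = 2 * k + (n + 1) + 1 by ring,
    show k + 1 + n = k + (n + 1) by ring, pow_succ]
  field_simp

end BesselTerm

-- `y = (t/m) a = (n/t) b`: split on `t ≤ m`.
lemma le_add_mul_of_mul_eq {y a b t m n c : ℝ} (ha : 0 ≤ a) (hb : 0 ≤ b) (hc : 0 ≤ c)
    (hm : 0 < m) (hnm : n ≤ c * m) (hya : m * y = t * a) (hyb : t * y = n * b) :
    y ≤ a + c * b := by
  rcases le_or_gt t m with htm | htm
  · have : y ≤ a := le_of_mul_le_mul_left (by nlinarith) hm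
    linarith [mul_nonneg hc hb]
  · have hty : t * y ≤ t * (c * b) := by
      nlinarith [mul_le_mul_of_nonneg_right hnm hb,
        mul_le_mul_of_nonneg_left htm.le (mul_nonneg hc hb)]
    linarith [le_of_mul_le_mul_left hty (hm.trans htm)]

lemma tsum_le_of_le_add_mul_succ {y a : ℕ → ℝ} {c : ℝ} (hc : 0 ≤ c) (ha : ∀ k, 0 ≤ a k)
    (hy : Summable y) (hsa : Summable a) (h : ∀ k, y k ≤ a k + c * a (k + 1)) :
    ∑' k, y k ≤ (1 + c) * ∑' k, a k := by
  have hsa' : Summable (fun k => a (k + 1)) := (summable_nat_add_iff 1).mpr hsa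
  have hshift : ∑' k, a (k + 1) ≤ ∑' k, a k := by
    rw [hsa.tsum_eq_zero_add]; linarith [ha 0]
  calc ∑' k, y k ≤ ∑' k, (a k + c * a (k + 1)) :=
        hy.tsum_le_tsum h (hsa.add (hsa'.mul_left c))
    _ = ∑' k, a k + c * ∑' k, a (k + 1) := by rw [hsa.tsum_add (hsa'.mul_left c), tsum_mul_left]
    _ ≤ (1 + c) * ∑' k, a k := by nlinarith

section BesselI

variable {x : ℝ}

lemma besselI_nonneg (n : ℕ) (hx : 0 ≤ x) : 0 ≤ besselI n x := by
  rw [besselI_eq_tsum]; exact tsum_nonneg (besselTerm_nonneg n hx)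

lemma besselI_one_pos (hx : 0 < x) : 0 < besselI 1 x := by
  rw [besselI_eq_tsum]
  refine (summable_besselTerm 1 hx.le).tsum_pos (besselTerm_nonneg 1 hx.le) 0 ?_
  simp [besselTerm]; positivity

lemma besselI_two_le_two_mul_besselI_one (hx : 0 ≤ x) : besselI 2 x ≤ 2 * besselI 1 x := by
  rw [besselI_eq_tsum, besselI_eq_tsum, show (2 : ℝ) = 1 + 1 by norm_num]
  refine tsum_le_of_le_add_mul_succ zero_le_one (besselTerm_nonneg 1 hx)
    (summable_besselTerm 2 hx) (summable_besselTerm 1 hx) fun k => ?_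
  refine le_add_mul_of_mul_eq (besselTerm_nonneg 1 hx k) (besselTerm_nonneg 1 hx (k + 1))
    zero_le_one (by positivity) (by linarith) (mul_besselTerm_succ_order 1 x k)
    (half_mul_besselTerm_succ_order 1 x k)

lemma besselI_zero_le_four_mul_besselI_one (hx : 2 ≤ x) : besselI 0 x ≤ 4 * besselI 1 x := by
  have hx0 : 0 ≤ x := by linarith
  have hI1 : 1 ≤ besselI 1 x := by
    rw [besselI_eq_tsum]
    calc (1 : ℝ) ≤ besselTerm 1 x 0 := by simp [besselTerm]; linarith
      _ ≤ _ := (summable_besselTerm 1 hx0).le_tsum 0 fun k _ => besselTerm_nonneg 1 hx0 k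
  have hterm (k : ℕ) :
      besselTerm 0 x (k + 1) ≤ besselTerm 1 x k + 2 * besselTerm 1 x (k + 1) := by
    refine le_add_mul_of_mul_eq (n := (k : ℝ) + 2) (besselTerm_nonneg 1 hx0 k)
      (besselTerm_nonneg 1 hx0 (k + 1)) zero_le_two (by positivity) (by linarith)
      (half_mul_besselTerm_succ_order 0 x k).symm ?_
    have := mul_besselTerm_succ_order 0 x (k + 1)
    push_cast at this
    linarith
  have htail : ∑' k, besselTerm 0 x (k + 1) ≤ (1 + 2) * besselI 1 x := by
    rw [besselI_eq_tsum]
    exact tsum_le_of_le_add_mul_succ zero_le_two (besselTerm_nonneg 1 hx0)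
      ((summable_nat_add_iff 1).mpr (summable_besselTerm 0 hx0)) (summable_besselTerm 1 hx0)
      hterm
  have hhead : besselTerm 0 x 0 = 1 := by simp [besselTerm]
  rw [besselI_eq_tsum 0, (summable_besselTerm 0 hx0).tsum_eq_zero_add, hhead]
  linarith

lemma besselI_zero_mono {y : ℝ} (hy : 0 ≤ y) (hyx : y ≤ x) : besselI 0 y ≤ besselI 0 x := by
  rw [besselI_eq_tsum, besselI_eq_tsum]
  refine (summable_besselTerm 0 hy).tsum_le_tsum (fun k => ?_)
    (summable_besselTerm 0 (hy.trans hyx))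
  unfold besselTerm
  gcongr

end BesselI

lemma tendsto_div_sqrt_mul_besselI_one {f : ℝ → ℝ} {C : ℝ}
    (hf : ∀ᶠ B in atTop, 0 ≤ f B ∧ f B ≤ C * besselI 1 (√B)) :
    Tendsto (fun B => f B / (√B * besselI 1 (√B))) atTop (𝓝 0) := by
  refine squeeze_zero' ?_ ?_ ((tendsto_const_nhds (x := C)).div_atTop Real.tendsto_sqrt_atTop)
  all_goals
    filter_upwards [hf, Real.tendsto_sqrt_atTop.eventually_gt_atTop 0]
      with B ⟨hf0, hfC⟩ hB
    have hI := besselI_one_pos hB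
  · positivity
  · rw [div_le_div_iff₀ (by positivity) hB]; nlinarith

lemma tendsto_lamStarR1 (V : ℝ) : Tendsto (lamStarR1 V) atTop (𝓝 (4 * V / Real.pi)) := by
  have hε : Tendsto (fun B => 4 * besselI 2 (√B) / (√B * besselI 1 (√B))) atTop (𝓝 0) := by
    refine tendsto_div_sqrt_mul_besselI_one (C := 8) ?_
    refine Eventually.of_forall fun B => ⟨?_, ?_⟩
    · have := besselI_nonneg 2 (Real.sqrt_nonneg B)
      positivity
    · linarith [besselI_two_le_two_mul_besselI_one (Real.sqrt_nonneg B)]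
  have hinv : Tendsto (fun B => (1 - 4 * besselI 2 (√B) / (√B * besselI 1 (√B)))⁻¹) atTop
      (𝓝 1) := by
    simpa using (tendsto_const_nhds.sub hε).inv₀ (by norm_num : (1 : ℝ) - 0 ≠ 0)
  have hlim := hinv.const_mul (4 * V / Real.pi)
  rw [mul_one] at hlim
  exact hlim

theorem hStarR1_zero_surface_tension_limit_general (V : ℝ)
    (r : ℝ) (hr : r ∈ Set.Icc (0 : ℝ) 1) :
    Filter.Tendsto (fun B => hStarR1 V B r) Filter.atTop
      (nhds (2 * V / Real.pi * (1 - r ^ 2))) := by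
  have hcorr : Tendsto (fun B => (besselI 0 (√B) - besselI 0 (√B * r)) / (√B * besselI 1 (√B)))
      atTop (𝓝 0) := by
    refine tendsto_div_sqrt_mul_besselI_one (C := 4) ?_
    filter_upwards [Real.tendsto_sqrt_atTop.eventually_ge_atTop 2] with B hB
    have hBr : 0 ≤ √B * r := mul_nonneg (Real.sqrt_nonneg B) hr.1
    have := besselI_zero_mono hBr (mul_le_of_le_one_right (Real.sqrt_nonneg B) hr.2)
    have := besselI_nonneg 0 hBr
    have := besselI_zero_le_four_mul_besselI_one hB
    constructor <;> linarith
  have hlim := ((tendsto_lamStarR1 V).div_const 2 |>.mul_const (1 - r ^ 2)).sub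
    ((tendsto_lamStarR1 V).mul hcorr)
  convert hlim using 2 with B
  · unfold hStarR1; ring
  · ring

theorem hStarR1_zero_surface_tension_limit (V : ℝ) (hV : 0 < V)
    (r : ℝ) (hr : r ∈ Set.Icc (0 : ℝ) 1) :
    Filter.Tendsto (fun B => hStarR1 V B r) Filter.atTop
      (nhds (2 * V / Real.pi * (1 - r ^ 2))) :=
  hStarR1_zero_surface_tension_limit_general V r hr
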